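/- Let Ω be a bounded open subset of ℝ^n and let Q = (a,b)^n be an open cube with the closure of Ω contained in Q. For every continuous function σ on the closure of Ω with σ > 0 everywhere on the closure of Ω, and every ε > 0, there exist a continuous function σ_e on the closed cube [a,b]^n with σ_e > 0 everywhere, σ_e = σ on the closure of Ω, and a positive integer k such that the rescaled multivariate Bernstein polynomial B_k(σ_e) is strictly positive on [a,b]^n and sup over the closure of Ω of |σ - B_k(σ_e)| ≤ ε. In particular, the set of restrictions to the closure of Ω of such Bernstein polynomials is dense, for the supremum norm, in the set of continuous functions on the closure of Ω that are positive everywhere on the closure of Ω. -/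

import Mathlib

/-- The Bernstein basis polynomial `p_{k,j}(t) = C(k,j) t^j (1-t)^{k-j}`. -/
noncomputable def bernsteinBasis (k j : ℕ) (t : ℝ) : ℝ :=
  (k.choose j : ℝ) * t ^ j * (1 - t) ^ (k - j)

/-- The rescaled multivariate Bernstein polynomial on the cube `[a,b]^n`:
`B_k(f)(x) = Σ_j f(a + (j/k)(b-a)) ∏_i p_{k, j_i}((x_i - a)/(b - a))`. -/
noncomputable def bernsteinCubeScaled (a b : ℝ) (n k : ℕ) (f : (Fin n → ℝ) → ℝ)
    (x : Fin n → ℝ) : ℝ :=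
  ∑ j : Fin n → Fin (k + 1),
    f (fun i => a + (((j i : ℕ) : ℝ) / (k : ℝ)) * (b - a)) *
      ∏ i, bernsteinBasis k (j i) ((x i - a) / (b - a))

/-! The Bernstein operator is positive and reproduces constants, so `B_k f ≥ m` wherever
`f ≥ m`; extending `σ` by Tietze and truncating it below at `m = min σ > 0` therefore makes
every `B_k(σ_e)` positive. On the unit cube, `B_k g (t)` averages `g` over the grid nodes with the
product binomial weights, whose coordinates have variance at most `1/(4k)`. Splitting the nodes
into those within `δ` of `t` (uniform continuity) and the others (Chebyshev) gives
`|g t - B_k g t| ≤ ε/2 + 2 ‖g‖ n / (4 δ² k)`, which is at most `ε` for large `k`. -/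

open Finset Filter

section Univariate

variable {t : ℝ}

theorem bernsteinBasis_nonneg (k j : ℕ) (ht : t ∈ Set.Icc 0 1) : 0 ≤ bernsteinBasis k j t :=
  mul_nonneg (mul_nonneg (Nat.cast_nonneg _) (pow_nonneg ht.1 _))
    (pow_nonneg (sub_nonneg.2 ht.2) _)

theorem bernsteinBasis_eq_bernstein (k j : ℕ) (ht : t ∈ Set.Icc 0 1) :
    bernsteinBasis k j t = bernstein k j ⟨t, ht⟩ := by
  simp [bernsteinBasis, bernstein_apply]

theorem sum_bernsteinBasis (k : ℕ) (ht : t ∈ Set.Icc 0 1) :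
    ∑ j : Fin (k + 1), bernsteinBasis k j t = 1 := by
  simpa only [bernsteinBasis_eq_bernstein _ _ ht] using bernstein.probability k ⟨t, ht⟩

theorem sum_sq_sub_mul_bernsteinBasis_le {k : ℕ} (hk : k ≠ 0) (ht : t ∈ Set.Icc 0 1) :
    ∑ j : Fin (k + 1), (t - (j : ℝ) / k) ^ 2 * bernsteinBasis k j t ≤ 1 / (4 * k) := by
  have hvar : ∑ j : Fin (k + 1), (t - (j : ℝ) / k) ^ 2 * bernsteinBasis k j t
      = t * (1 - t) / k := by
    simpa only [bernsteinBasis_eq_bernstein _ _ ht, bernstein.z] using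
      bernstein.variance hk ⟨t, ht⟩
  have hk' : (0 : ℝ) < k := by positivity
  rw [hvar, div_le_div_iff₀ hk' (by positivity)]
  nlinarith [sq_nonneg (2 * t - 1)]

end Univariate

section Cube

variable {ι : Type*} {k : ℕ} {t : ι → ℝ}

noncomputable def cubeNode (k : ℕ) (j : ι → Fin (k + 1)) : ι → ℝ :=
  fun i => ((j i : ℕ) : ℝ) / k

theorem cubeNode_mem_Icc (j : ι → Fin (k + 1)) : cubeNode k j ∈ Set.Icc 0 1 :=
  ⟨fun i => by unfold cubeNode; positivity,
    fun i => div_le_one_of_le₀ (Nat.cast_le.2 (j i).is_le) (Nat.cast_nonneg k)⟩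

variable [Fintype ι]

noncomputable def bernsteinWeight (k : ℕ) (j : ι → Fin (k + 1)) (t : ι → ℝ) : ℝ :=
  ∏ i, bernsteinBasis k (j i) (t i)

theorem bernsteinWeight_nonneg (ht : t ∈ Set.Icc 0 1) (j : ι → Fin (k + 1)) :
    0 ≤ bernsteinWeight k j t :=
  prod_nonneg fun i _ => bernsteinBasis_nonneg k _ ⟨ht.1 i, ht.2 i⟩

theorem abs_sub_le_add_mul_sum_sq {g : (ι → ℝ) → ℝ} {s : ι → ℝ} {M δ ε : ℝ}
    (hδ : 0 < δ) (hε : 0 ≤ ε) (ht : |g t| ≤ M) (hs : |g s| ≤ M)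
    (hclose : dist t s < δ → |g t - g s| ≤ ε) :
    |g t - g s| ≤ ε + 2 * M / δ ^ 2 * ∑ i, (t i - s i) ^ 2 := by
  have hM : 0 ≤ M := (abs_nonneg _).trans ht
  by_cases hts : dist t s < δ
  · have : 0 ≤ 2 * M / δ ^ 2 * ∑ i, (t i - s i) ^ 2 := by positivity
    linarith [hclose hts]
  · obtain ⟨i, hi⟩ : ∃ i, δ ≤ |t i - s i| := by
      simpa [dist_pi_lt_iff hδ, Real.dist_eq] using hts
    have hfar : δ ^ 2 ≤ ∑ i, (t i - s i) ^ 2 :=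
      calc δ ^ 2 ≤ |t i - s i| ^ 2 := pow_le_pow_left₀ hδ.le hi 2
        _ = (t i - s i) ^ 2 := sq_abs _
        _ ≤ ∑ i, (t i - s i) ^ 2 :=
          single_le_sum (f := fun i => (t i - s i) ^ 2) (fun i _ => sq_nonneg _) (mem_univ i)
    have h2M : 2 * M ≤ 2 * M / δ ^ 2 * ∑ i, (t i - s i) ^ 2 := by
      rw [div_mul_eq_mul_div, le_div_iff₀ (by positivity)]
      exact mul_le_mul_of_nonneg_left hfar (by positivity)
    linarith [abs_sub (g t) (g s)]

variable [DecidableEq ι]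

theorem sum_bernsteinWeight (ht : t ∈ Set.Icc 0 1) :
    ∑ j : ι → Fin (k + 1), bernsteinWeight k j t = 1 := by
  refine (Fintype.prod_sum fun i (m : Fin (k + 1)) => bernsteinBasis k m (t i)).symm.trans ?_
  exact Fintype.prod_eq_one _ fun i => sum_bernsteinBasis k ⟨ht.1 i, ht.2 i⟩

theorem sum_mul_bernsteinWeight_of_coord (ht : t ∈ Set.Icc 0 1) (i₀ : ι) (φ : Fin (k + 1) → ℝ) :
    ∑ j : ι → Fin (k + 1), φ (j i₀) * bernsteinWeight k j t
      = ∑ m : Fin (k + 1), φ m * bernsteinBasis k m (t i₀) := by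
  have hsplit (j : ι → Fin (k + 1)) : φ (j i₀) * bernsteinWeight k j t
      = ∏ i, (if i = i₀ then φ (j i) else 1) * bernsteinBasis k (j i) (t i) := by
    rw [prod_mul_distrib, Fintype.prod_ite_eq', bernsteinWeight]
  simp_rw [hsplit]
  refine (Fintype.prod_sum fun i (m : Fin (k + 1)) =>
    (if i = i₀ then φ m else 1) * bernsteinBasis k m (t i)).symm.trans ?_
  refine (Fintype.prod_eq_single i₀ fun i hi => ?_).trans (by simp)
  simpa only [hi, if_false, one_mul] using sum_bernsteinBasis k ⟨ht.1 i, ht.2 i⟩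

noncomputable def bernsteinCube (k : ℕ) (g : (ι → ℝ) → ℝ) (t : ι → ℝ) : ℝ :=
  ∑ j : ι → Fin (k + 1), g (cubeNode k j) * bernsteinWeight k j t

theorem le_bernsteinCube {g : (ι → ℝ) → ℝ} {m : ℝ} (hm : ∀ j, m ≤ g (cubeNode k j))
    (ht : t ∈ Set.Icc 0 1) : m ≤ bernsteinCube k g t :=
  calc m = ∑ j : ι → Fin (k + 1), m * bernsteinWeight k j t := by
        rw [← mul_sum, sum_bernsteinWeight ht, mul_one]
    _ ≤ bernsteinCube k g t :=
        sum_le_sum fun j _ => mul_le_mul_of_nonneg_right (hm j) (bernsteinWeight_nonneg ht j)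

theorem sub_bernsteinCube_eq (g : (ι → ℝ) → ℝ) (ht : t ∈ Set.Icc 0 1) :
    g t - bernsteinCube k g t
      = ∑ j : ι → Fin (k + 1), (g t - g (cubeNode k j)) * bernsteinWeight k j t := by
  simp only [sub_mul, sum_sub_distrib, ← mul_sum, sum_bernsteinWeight ht, mul_one, bernsteinCube]

theorem sum_sum_sq_sub_mul_bernsteinWeight_le (hk : k ≠ 0) (ht : t ∈ Set.Icc 0 1) :
    ∑ j : ι → Fin (k + 1), (∑ i, (t i - cubeNode k j i) ^ 2) * bernsteinWeight k j t
      ≤ Fintype.card ι / (4 * k) := by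
  calc ∑ j : ι → Fin (k + 1), (∑ i, (t i - cubeNode k j i) ^ 2) * bernsteinWeight k j t
      = ∑ i, ∑ m : Fin (k + 1), (t i - (m : ℝ) / k) ^ 2 * bernsteinBasis k m (t i) := by
        simp_rw [sum_mul]
        rw [sum_comm]
        exact sum_congr rfl fun i _ =>
          sum_mul_bernsteinWeight_of_coord ht i fun m => (t i - (m : ℝ) / k) ^ 2
    _ ≤ ∑ _i : ι, 1 / (4 * (k : ℝ)) :=
        sum_le_sum fun i _ => sum_sq_sub_mul_bernsteinBasis_le hk ⟨ht.1 i, ht.2 i⟩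
    _ = Fintype.card ι / (4 * k) := by rw [sum_const, card_univ, nsmul_eq_mul, mul_one_div]

theorem abs_sub_bernsteinCube_le {g : (ι → ℝ) → ℝ} {M δ ε : ℝ} (hk : k ≠ 0) (hδ : 0 < δ)
    (hε : 0 ≤ ε) (hM : ∀ s ∈ Set.Icc 0 1, |g s| ≤ M) (ht : t ∈ Set.Icc 0 1)
    (hclose : ∀ s ∈ Set.Icc 0 1, dist t s < δ → |g t - g s| ≤ ε) :
    |g t - bernsteinCube k g t| ≤ ε + 2 * M / δ ^ 2 * (Fintype.card ι / (4 * k)) := by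
  have hM0 : 0 ≤ M := (abs_nonneg _).trans (hM t ht)
  calc |g t - bernsteinCube k g t|
      ≤ ∑ j : ι → Fin (k + 1), |g t - g (cubeNode k j)| * bernsteinWeight k j t := by
        rw [sub_bernsteinCube_eq g ht]
        refine (abs_sum_le_sum_abs _ _).trans_eq (sum_congr rfl fun j _ => ?_)
        rw [abs_mul, abs_of_nonneg (bernsteinWeight_nonneg ht j)]
    _ ≤ ∑ j : ι → Fin (k + 1), (ε + 2 * M / δ ^ 2 * ∑ i, (t i - cubeNode k j i) ^ 2)
          * bernsteinWeight k j t := by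
        refine sum_le_sum fun j _ => mul_le_mul_of_nonneg_right ?_ (bernsteinWeight_nonneg ht j)
        exact abs_sub_le_add_mul_sum_sq hδ hε (hM t ht) (hM _ (cubeNode_mem_Icc j))
          (hclose _ (cubeNode_mem_Icc j))
    _ = ε + 2 * M / δ ^ 2 * ∑ j : ι → Fin (k + 1),
          (∑ i, (t i - cubeNode k j i) ^ 2) * bernsteinWeight k j t := by
        simp only [add_mul, sum_add_distrib, ← mul_sum, sum_bernsteinWeight ht, mul_one, mul_assoc]
    _ ≤ ε + 2 * M / δ ^ 2 * (Fintype.card ι / (4 * k)) := by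
        gcongr
        exact sum_sum_sq_sub_mul_bernsteinWeight_le hk ht

theorem eventually_abs_sub_bernsteinCube_le {g : (ι → ℝ) → ℝ}
    (hg : ContinuousOn g (Set.Icc 0 1)) {ε : ℝ} (hε : 0 < ε) :
    ∀ᶠ k in atTop, ∀ t ∈ Set.Icc 0 1, |g t - bernsteinCube k g t| ≤ ε := by
  obtain ⟨M, hM⟩ := isCompact_Icc.exists_bound_of_continuousOn hg
  obtain ⟨δ, hδ, hunif⟩ := Metric.uniformContinuousOn_iff.1
    (isCompact_Icc.uniformContinuousOn_of_continuous hg) (ε / 2) (half_pos hε)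
  have hsmall : ∀ᶠ k : ℕ in atTop, 2 * M / δ ^ 2 * (Fintype.card ι / (4 * k)) ≤ ε / 2 := by
    filter_upwards [(tendsto_const_div_atTop_nhds_zero_nat (M * Fintype.card ι / (2 * δ ^ 2))
      ).eventually (ge_mem_nhds (half_pos hε))] with k hk
    exact le_of_eq_of_le (by ring) hk
  filter_upwards [hsmall, eventually_ne_atTop 0] with k hk hk0 t ht
  have hbound := abs_sub_bernsteinCube_le hk0 hδ (half_pos hε).le
    (fun s hs => (Real.norm_eq_abs (g s)).symm.trans_le (hM s hs)) ht
    fun s hs hts => (hunif t ht s hs hts).le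
  linarith

end Cube

theorem exists_continuous_extension_ge {X : Type*} [TopologicalSpace X] [NormalSpace X]
    {K : Set X} (hK : IsClosed K) {σ : X → ℝ} (hσ : ContinuousOn σ K) {m : ℝ}
    (hm : ∀ x ∈ K, m ≤ σ x) : ∃ g : X → ℝ, Continuous g ∧ (∀ x, m ≤ g x) ∧ Set.EqOn g σ K := by
  obtain ⟨g, hg_ge, hg_eq⟩ := ContinuousMap.exists_restrict_eq_forall_mem_of_closed
    ⟨K.domRestrict σ, hσ.domRestrict⟩ (t := Set.Ici m) (fun x => hm x x.2) Set.nonempty_Ici hK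
  exact ⟨g, g.continuous, hg_ge, fun x hx => DFunLike.congr_fun hg_eq ⟨x, hx⟩⟩

section Scaled

variable {n k : ℕ} {a b : ℝ} {x : Fin n → ℝ}

theorem bernsteinCubeScaled_eq_bernsteinCube (f : (Fin n → ℝ) → ℝ) :
    bernsteinCubeScaled a b n k f x = bernsteinCube k (fun t => f fun i => a + t i * (b - a))
      (fun i => (x i - a) / (b - a)) :=
  rfl

theorem unitCoords_mem_Icc (hab : a < b) (hx : x ∈ Set.univ.pi fun _ => Set.Icc a b) :
    (fun i => (x i - a) / (b - a)) ∈ Set.Icc 0 1 := by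
  have hba : 0 < b - a := sub_pos.2 hab
  refine ⟨fun i => div_nonneg (sub_nonneg.2 (hx i trivial).1) hba.le, fun i => ?_⟩
  exact (div_le_one hba).2 (sub_le_sub_right (hx i trivial).2 a)

theorem le_bernsteinCubeScaled {f : (Fin n → ℝ) → ℝ} {m : ℝ} (hm : ∀ y, m ≤ f y) (hab : a < b)
    (hx : x ∈ Set.univ.pi fun _ => Set.Icc a b) : m ≤ bernsteinCubeScaled a b n k f x := by
  rw [bernsteinCubeScaled_eq_bernsteinCube]
  exact le_bernsteinCube (fun _ => hm _) (unitCoords_mem_Icc hab hx)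

theorem eventually_abs_sub_bernsteinCubeScaled_le {f : (Fin n → ℝ) → ℝ} (hab : a < b)
    (hf : ContinuousOn f (Set.univ.pi fun _ => Set.Icc a b)) {ε : ℝ} (hε : 0 < ε) :
    ∀ᶠ k in atTop, ∀ x ∈ Set.univ.pi (fun _ => Set.Icc a b),
      |f x - bernsteinCubeScaled a b n k f x| ≤ ε := by
  set G : (Fin n → ℝ) → ℝ := fun t => f fun i => a + t i * (b - a)
  have hba : 0 < b - a := sub_pos.2 hab
  have hG : ContinuousOn G (Set.Icc 0 1) := by
    refine hf.comp (by fun_prop) fun t ht i _ => ⟨?_, ?_⟩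
    · linarith [mul_nonneg (ht.1 i) hba.le]
    · linarith [mul_le_of_le_one_left hba.le (ht.2 i)]
  have hGx (x : Fin n → ℝ) : G (fun i => (x i - a) / (b - a)) = f x := by
    simp only [G, div_mul_cancel₀ _ hba.ne', add_sub_cancel]
  filter_upwards [eventually_abs_sub_bernsteinCube_le hG hε] with k hk x hx
  simpa only [hGx, bernsteinCubeScaled_eq_bernsteinCube] using hk _ (unitCoords_mem_Icc hab hx)

end Scaled

theorem bernstein_dense_in_positive_continuous_general (n : ℕ) (a b : ℝ) (hab : a < b)
    (Ω : Set (Fin n → ℝ))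
    (hΩQ : closure Ω ⊆ Set.pi Set.univ fun _ : Fin n => Set.Ioo a b)
    (σ : (Fin n → ℝ) → ℝ) (hσcont : ContinuousOn σ (closure Ω))
    (hσpos : ∀ x ∈ closure Ω, 0 < σ x) (ε : ℝ) (hε : 0 < ε) :
    ∃ σe : (Fin n → ℝ) → ℝ, ∃ k : ℕ, 0 < k ∧
      ContinuousOn σe (Set.pi Set.univ fun _ : Fin n => Set.Icc a b) ∧
      (∀ x ∈ Set.pi Set.univ fun _ : Fin n => Set.Icc a b, 0 < σe x) ∧
      (∀ x ∈ closure Ω, σe x = σ x) ∧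
      (∀ x ∈ Set.pi Set.univ fun _ : Fin n => Set.Icc a b,
        0 < bernsteinCubeScaled a b n k σe x) ∧
      (⨆ x : closure Ω, |σ x - bernsteinCubeScaled a b n k σe x|) ≤ ε := by
  have hΩ : closure Ω ⊆ Set.pi Set.univ fun _ : Fin n => Set.Icc a b :=
    hΩQ.trans (Set.pi_mono fun _ _ => Set.Ioo_subset_Icc_self)
  have hK : IsCompact (closure Ω) :=
    (isCompact_univ_pi fun _ => isCompact_Icc).of_isClosed_subset isClosed_closure hΩ
  obtain ⟨m, hm0, hmσ⟩ := hK.exists_forall_le' hσcont hσpos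
  obtain ⟨σe, hσe_cont, hσe_ge, hσe_eq⟩ :=
    exists_continuous_extension_ge isClosed_closure hσcont hmσ
  obtain ⟨k, hk_approx, hk0⟩ := ((eventually_abs_sub_bernsteinCubeScaled_le hab
    hσe_cont.continuousOn hε).and (eventually_gt_atTop 0)).exists
  refine ⟨σe, k, hk0, hσe_cont.continuousOn, fun x _ => hm0.trans_le (hσe_ge x), hσe_eq,
    fun x hx => hm0.trans_le (le_bernsteinCubeScaled hσe_ge hab hx), ?_⟩
  refine Real.iSup_le (fun x => ?_) hε.le
  rw [← hσe_eq x.2]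
  exact hk_approx x (hΩ x.2)

/-- Let `Ω ⊆ ℝⁿ` be bounded and open with `closure Ω` contained in the open cube `(a,b)^n`.
For every continuous `σ > 0` on `closure Ω` and every `ε > 0` there are a continuous positive
extension `σ_e` of `σ` to the closed cube `[a,b]^n` and a positive integer `k` such that the
rescaled Bernstein polynomial `B_k(σ_e)` is strictly positive on `[a,b]^n` and approximates `σ`
uniformly on `closure Ω` within `ε`. -/
theorem bernstein_dense_in_positive_continuous (n : ℕ) (a b : ℝ) (hab : a < b)
    (Ω : Set (Fin n → ℝ)) (hΩopen : IsOpen Ω) (hΩbdd : Bornology.IsBounded Ω)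
    (hΩQ : closure Ω ⊆ Set.pi Set.univ fun _ : Fin n => Set.Ioo a b)
    (σ : (Fin n → ℝ) → ℝ) (hσcont : ContinuousOn σ (closure Ω))
    (hσpos : ∀ x ∈ closure Ω, 0 < σ x) (ε : ℝ) (hε : 0 < ε) :
    ∃ σe : (Fin n → ℝ) → ℝ, ∃ k : ℕ, 0 < k ∧
      ContinuousOn σe (Set.pi Set.univ fun _ : Fin n => Set.Icc a b) ∧
      (∀ x ∈ Set.pi Set.univ fun _ : Fin n => Set.Icc a b, 0 < σe x) ∧
      (∀ x ∈ closure Ω, σe x = σ x) ∧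
      (∀ x ∈ Set.pi Set.univ fun _ : Fin n => Set.Icc a b,
        0 < bernsteinCubeScaled a b n k σe x) ∧
      (⨆ x : closure Ω, |σ x - bernsteinCubeScaled a b n k σe x|) ≤ ε :=
  bernstein_dense_in_positive_continuous_general n a b hab Ω hΩQ σ hσcont hσpos ε hε
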